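/- arXiv:2205.05033 — 2 statements merged into one kernel-verified Lean document; each statement's English description precedes it below -/
import Mathlib

section
/- An inflexible assemblage is an extreme point of the set of all no-signaling assemblages: if Σ = {p_{a|x}|ψ_{a|x}⟩⟨ψ_{a|x}|} is an assemblage of pure states such that every no-signaling assemblage Σ' = {q_{a|x}|ψ_{a|x}⟩⟨ψ_{a|x}|} built from the same pure states (with q_{a|x} = 0 whenever p_{a|x} = 0) equals Σ, then Σ cannot be written as a nontrivial convex combination of two distinct no-signaling assemblages. -/
open Matrix ComplexOrder

noncomputable section

/-- Rank-one operator `|v⟩⟨v|`. -/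
def proj {α : Type*} (v : α → ℂ) : Matrix α α ℂ :=
  Matrix.of fun i j => v i * (starRingEnd ℂ) (v j)

/-- A no-signaling assemblage: positive semidefinite members summing, for every
setting, to a common density matrix. -/
def IsNSA {n : ℕ} {A X : Type*} [Fintype A]
    (σ : A → X → Matrix (Fin n) (Fin n) ℂ) : Prop :=
  (∀ a x, (σ a x).PosSemidef) ∧
  ∃ ρ : Matrix (Fin n) (Fin n) ℂ, ρ.PosSemidef ∧ ρ.trace = 1 ∧ ∀ x, ∑ a, σ a x = ρ

/-! If `p |ψ⟩⟨ψ| = t σ₁ + (1 - t) σ₂` with `σ₁, σ₂ ≥ 0`, then `σ₁` vanishes on `ψ^⊥`, and being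
Hermitian it is a nonnegative multiple `q₁ |ψ⟩⟨ψ|`; likewise for `σ₂`. Taking traces gives
`p = t q₁ + (1 - t) q₂`, so `q₁, q₂` vanish wherever `p` does, and `σ₁, σ₂` are no-signaling
assemblages built from the same pure states as `Σ`. Inflexibility then forces `σ₁ = σ₂ = Σ`. -/

lemma proj_eq_vecMulVec {α : Type*} (v : α → ℂ) : proj v = vecMulVec v (star v) := rfl

section

variable {m : Type*} [Fintype m]

lemma trace_proj {ψ : m → ℂ} (hψ : star ψ ⬝ᵥ ψ = 1) : (proj ψ).trace = 1 := by
  rw [proj_eq_vecMulVec, trace_vecMulVec, dotProduct_comm, hψ]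

namespace Matrix

lemma PosSemidef.mulVec_eq_zero_of_add_eq_smul_proj {M N : Matrix m m ℂ}
    (hM : M.PosSemidef) (hN : N.PosSemidef) {c : ℂ} {ψ v : m → ℂ}
    (h : M + N = c • proj ψ) (hv : star ψ ⬝ᵥ v = 0) : M *ᵥ v = 0 := by
  have hsum : star v ⬝ᵥ M *ᵥ v + star v ⬝ᵥ N *ᵥ v = 0 := by
    simp [← dotProduct_add, ← add_mulVec, h, proj_eq_vecMulVec, smul_mulVec, vecMulVec_mulVec, hv]
  refine (hM.dotProduct_mulVec_zero_iff v).mp ?_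
  exact ((add_eq_zero_iff_of_nonneg (hM.dotProduct_mulVec_nonneg v)
    (hN.dotProduct_mulVec_nonneg v)).mp hsum).1

lemma IsHermitian.eq_smul_proj_of_mulVec_eq_zero {M : Matrix m m ℂ} (hM : M.IsHermitian)
    {ψ : m → ℂ} (hψ : star ψ ⬝ᵥ ψ = 1) (hker : ∀ v, star ψ ⬝ᵥ v = 0 → M *ᵥ v = 0) :
    M = (star ψ ⬝ᵥ M *ᵥ ψ) • proj ψ := by
  have hMP : M * proj ψ = M := by
    refine ext_iff_mulVec.mpr fun v => ?_
    rw [← mulVec_mulVec, eq_comm, ← sub_eq_zero, ← mulVec_sub]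
    apply hker
    simp [proj_eq_vecMulVec, vecMulVec_mulVec, dotProduct_sub, hψ]
  have hPM : proj ψ * M = M := by
    simpa [conjTranspose_mul, hM.eq, proj_eq_vecMulVec, conjTranspose_vecMulVec]
      using congrArg (·ᴴ) hMP
  calc M = proj ψ * M * proj ψ := by rw [hPM, hMP]
    _ = _ := by
      rw [proj_eq_vecMulVec, vecMulVec_mul, vecMulVec_mul_vecMulVec, vecMulVec_smul,
        dotProduct_mulVec]

lemma PosSemidef.exists_eq_smul_proj_of_add_eq_smul_proj {M N : Matrix m m ℂ}
    (hM : M.PosSemidef) (hN : N.PosSemidef) {c : ℂ} {ψ : m → ℂ} (hψ : star ψ ⬝ᵥ ψ = 1)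
    (h : M + N = c • proj ψ) : ∃ r : ℝ, 0 ≤ r ∧ M = (r : ℂ) • proj ψ := by
  obtain ⟨r, hr, hrM⟩ := RCLike.nonneg_iff_exists_ofReal.mp (hM.dotProduct_mulVec_nonneg ψ)
  have hMψ := hM.isHermitian.eq_smul_proj_of_mulVec_eq_zero hψ
    fun v hv => hM.mulVec_eq_zero_of_add_eq_smul_proj hN h hv
  rw [← hrM] at hMψ
  exact ⟨r, hr, hMψ⟩

lemma PosSemidef.exists_eq_smul_proj_of_smul_add_smul_eq_smul_proj {M N : Matrix m m ℂ}
    (hM : M.PosSemidef) (hN : N.PosSemidef) {c : ℂ} {ψ : m → ℂ} (hψ : star ψ ⬝ᵥ ψ = 1)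
    {t s : ℝ} (ht : 0 < t) (hs : 0 ≤ s) (h : (t : ℂ) • M + (s : ℂ) • N = c • proj ψ) :
    ∃ q : ℝ, 0 ≤ q ∧ M = (q : ℂ) • proj ψ := by
  have htM_psd : ((t : ℂ) • M).PosSemidef := hM.smul (Complex.zero_le_real.mpr ht.le)
  have hsN_psd : ((s : ℂ) • N).PosSemidef := hN.smul (Complex.zero_le_real.mpr hs)
  obtain ⟨r, hr, htM⟩ := htM_psd.exists_eq_smul_proj_of_add_eq_smul_proj hsN_psd hψ h
  refine ⟨r / t, by positivity, smul_right_injective _ (Complex.ofReal_ne_zero.mpr ht.ne') ?_⟩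
  simp only [htM, smul_smul, ← Complex.ofReal_mul, mul_div_cancel₀ r ht.ne']

end Matrix

end

theorem inflexible_is_extreme_general {n : ℕ} {A X : Type*} [Fintype A]
    (p : A → X → ℝ) (ψ : A → X → (Fin n → ℂ))
    (hψ : ∀ a x, ∑ i, (starRingEnd ℂ) (ψ a x i) * ψ a x i = 1)
    (hinflex : ∀ q : A → X → ℝ, (∀ a x, 0 ≤ q a x) →
      (∀ a x, p a x = 0 → q a x = 0) →
      IsNSA (fun a x => (q a x : ℂ) • proj (ψ a x)) →
      ∀ a x, (q a x : ℂ) • proj (ψ a x) = (p a x : ℂ) • proj (ψ a x)) :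
    ∀ (σ₁ σ₂ : A → X → Matrix (Fin n) (Fin n) ℂ), IsNSA σ₁ → IsNSA σ₂ →
      ∀ t : ℝ, 0 < t → t < 1 →
      (∀ a x, (p a x : ℂ) • proj (ψ a x) =
        (t : ℂ) • σ₁ a x + ((1 - t : ℝ) : ℂ) • σ₂ a x) →
      (∀ a x, σ₁ a x = (p a x : ℂ) • proj (ψ a x)) ∧
      (∀ a x, σ₂ a x = (p a x : ℂ) • proj (ψ a x)) := by
  intro σ₁ σ₂ h₁ h₂ t ht0 ht1 hdec
  have hψ' : ∀ a x, star (ψ a x) ⬝ᵥ ψ a x = 1 := fun a x => by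
    simpa [dotProduct, Complex.star_def] using hψ a x
  have ht1' : 0 < 1 - t := by linarith
  choose q₁ hq₁ hσ₁ using fun a x => (h₁.1 a x).exists_eq_smul_proj_of_smul_add_smul_eq_smul_proj
    (h₂.1 a x) (hψ' a x) ht0 ht1'.le (hdec a x).symm
  choose q₂ hq₂ hσ₂ using fun a x => (h₂.1 a x).exists_eq_smul_proj_of_smul_add_smul_eq_smul_proj
    (h₁.1 a x) (hψ' a x) ht1' ht0.le ((add_comm _ _).trans (hdec a x).symm)
  have hp : ∀ a x, p a x = t * q₁ a x + (1 - t) * q₂ a x := fun a x => by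
    have := congrArg trace (hdec a x)
    simp only [hσ₁, hσ₂, trace_add, trace_smul, trace_proj (hψ' a x), smul_eq_mul, mul_one] at this
    exact_mod_cast this
  have hsupp₁ : ∀ a x, p a x = 0 → q₁ a x = 0 := fun a x h0 => by
    nlinarith [hp a x, hq₁ a x, hq₂ a x, mul_nonneg ht1'.le (hq₂ a x)]
  have hsupp₂ : ∀ a x, p a x = 0 → q₂ a x = 0 := fun a x h0 => by
    nlinarith [hp a x, hq₁ a x, hq₂ a x, mul_nonneg ht0.le (hq₁ a x)]
  have hNS₁ : IsNSA fun a x => (q₁ a x : ℂ) • proj (ψ a x) := by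
    simpa only [← hσ₁] using h₁
  have hNS₂ : IsNSA fun a x => (q₂ a x : ℂ) • proj (ψ a x) := by
    simpa only [← hσ₂] using h₂
  exact ⟨fun a x => (hσ₁ a x).trans (hinflex q₁ hq₁ hsupp₁ hNS₁ a x),
    fun a x => (hσ₂ a x).trans (hinflex q₂ hq₂ hsupp₂ hNS₂ a x)⟩

/-- an inflexible assemblage of pure states is an extreme point of
the set of no-signaling assemblages. -/
theorem inflexible_is_extreme {n : ℕ} {A X : Type*} [Fintype A]
    (p : A → X → ℝ) (ψ : A → X → (Fin n → ℂ))
    (hp : ∀ a x, 0 ≤ p a x)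
    (hψ : ∀ a x, ∑ i, (starRingEnd ℂ) (ψ a x i) * ψ a x i = 1)
    (hNS : IsNSA (fun a x => (p a x : ℂ) • proj (ψ a x)))
    (hinflex : ∀ q : A → X → ℝ, (∀ a x, 0 ≤ q a x) →
      (∀ a x, p a x = 0 → q a x = 0) →
      IsNSA (fun a x => (q a x : ℂ) • proj (ψ a x)) →
      ∀ a x, (q a x : ℂ) • proj (ψ a x) = (p a x : ℂ) • proj (ψ a x)) :
    ∀ (σ₁ σ₂ : A → X → Matrix (Fin n) (Fin n) ℂ), IsNSA σ₁ → IsNSA σ₂ →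
      ∀ t : ℝ, 0 < t → t < 1 →
      (∀ a x, (p a x : ℂ) • proj (ψ a x) =
        (t : ℂ) • σ₁ a x + ((1 - t : ℝ) : ℂ) • σ₂ a x) →
      (∀ a x, σ₁ a x = (p a x : ℂ) • proj (ψ a x)) ∧
      (∀ a x, σ₂ a x = (p a x : ℂ) • proj (ψ a x)) :=
  inflexible_is_extreme_general p ψ hψ hinflex
end
end

section
/- For the assemblage Σ of Choi matrices in equation (25) of the paper (the 4×4 array of rank-one operators built from |φ⟩, |ϕ⟩, |ξ⟩, |θ⟩ with coefficients as displayed), any family Σ' = {σ'_{ab|xy}} of positive semidefinite operators satisfying the asymmetric no-signaling conditions (Σ_a σ'_{ab|xy} independent of x; Σ_b Tr_{C̃}(σ'_{ab|xy}) independent of y; Σ_{ab} σ'_{ab|xy} = Σ_{ab} σ_{ab|xy}) and supported on the same rank-one operators as Σ, must agree with Σ on the entries with x = 0: σ'_{ab|0y} = σ_{ab|0y} for all a, b, y. -/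
open Matrix Kronecker ComplexOrder

noncomputable section

/-- Partial trace over the first tensor factor. -/
def ptraceFst {m n : Type*} [Fintype m] (Y : Matrix (m × n) (m × n) ℂ) : Matrix n n ℂ :=
  Matrix.of fun i j => ∑ p, Y (p, i) (p, j)

/-- `|φ⟩ = (|00⟩ + |11⟩)/√2`. -/
def φv : Fin 2 × Fin 2 → ℂ := fun p => if p.1 = p.2 then 1 / (Real.sqrt 2 : ℂ) else 0

/-- `|ϕ⟩ = (|10⟩ + |01⟩)/√2`. -/
def ϕv : Fin 2 × Fin 2 → ℂ := fun p => if p.1 = p.2 then 0 else 1 / (Real.sqrt 2 : ℂ)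

/-- `|ξ⟩ = (|φ⟩ + |ϕ⟩)/√2`. -/
def ξv : Fin 2 × Fin 2 → ℂ := fun p => (φv p + ϕv p) / (Real.sqrt 2 : ℂ)

/-- `|θ⟩ = (|φ⟩ − |ϕ⟩)/√2`. -/
def θv : Fin 2 × Fin 2 → ℂ := fun p => (φv p - ϕv p) / (Real.sqrt 2 : ℂ)

/-- The assemblage of Choi matrices of equation (25) of the paper. -/
def sigAss (a b x y : Fin 2) : Matrix (Fin 2 × Fin 2) (Fin 2 × Fin 2) ℂ :=
  if x = 0 then
    if y = 0 then (if a = b then ((1 : ℂ) / 2) • proj (if a = 0 then φv else ϕv) else 0)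
    else ((1 : ℂ) / 4) • proj (if a = 0 then φv else ϕv)
  else
    if y = 0 then ((1 : ℂ) / 4) • proj (if b = 0 then φv else ϕv)
    else ((1 : ℂ) / 4) • proj (if a = b then ξv else θv)


lemma hs2 : ((Real.sqrt 2 : ℝ) : ℂ) * ((Real.sqrt 2 : ℝ) : ℂ) = 2 := by
  norm_cast; exact Real.mul_self_sqrt (by norm_num)

lemma hs2' : ((Real.sqrt 2 : ℝ) : ℂ)⁻¹ / ((Real.sqrt 2 : ℝ) : ℂ) = 2⁻¹ := by
  rw [inv_eq_one_div, div_div, hs2, one_div]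

lemma ξv_eq (p : Fin 2 × Fin 2) : ξv p = 1/2 := by
  simp only [ξv, φv, ϕv]
  split <;> simp [hs2']

lemma θv_eq (p : Fin 2 × Fin 2) : θv p = if p.1 = p.2 then 1/2 else -(1/2) := by
  simp only [θv, φv, ϕv]
  split <;> simp [neg_div, hs2']

lemma pφ (i j : Fin 2 × Fin 2) :
    proj φv i j = (if i.1 = i.2 then 1 else 0) * (if j.1 = j.2 then 1 else 0) / 2 := by
  simp [proj, φv, map_div₀, Complex.conj_ofReal]
  split <;> split <;> simp [← mul_inv, hs2]

lemma pϕ (i j : Fin 2 × Fin 2) :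
    proj ϕv i j = (if i.1 = i.2 then 0 else 1) * (if j.1 = j.2 then 0 else 1) / 2 := by
  simp [proj, ϕv, map_div₀, Complex.conj_ofReal]
  split <;> split <;> simp [← mul_inv, hs2]

lemma pξ (i j : Fin 2 × Fin 2) : proj ξv i j = 1/4 := by
  simp [proj, ξv_eq, map_ofNat]
  norm_num

lemma pθ (i j : Fin 2 × Fin 2) :
    proj θv i j = (if i.1 = i.2 then 1 else -1) * (if j.1 = j.2 then 1 else -1) / 4 := by
  simp [proj, θv_eq]
  split <;> split <;> simp [map_ofNat] <;> norm_num

/-- any family of PSD operators supported on the same rank-one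
operators as `sigAss` and satisfying the asymmetric no-signaling conditions
must agree with `sigAss` on all entries with `x = 0`. -/
theorem sigAss_asymmetric_rigidity_x0
    (σ' : Fin 2 → Fin 2 → Fin 2 → Fin 2 → Matrix (Fin 2 × Fin 2) (Fin 2 × Fin 2) ℂ)
    (hpsd : ∀ a b x y, (σ' a b x y).PosSemidef)
    (hsupp : ∀ a b x y, ∃ t : ℝ, 0 ≤ t ∧ σ' a b x y = (t : ℂ) • sigAss a b x y)
    (h1 : ∀ b y x x', ∑ a, σ' a b x y = ∑ a, σ' a b x' y)
    (h2 : ∀ a x y y', ∑ b, ptraceFst (σ' a b x y) = ∑ b, ptraceFst (σ' a b x y'))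
    (h3 : ∀ x y, ∑ a, ∑ b, σ' a b x y = ∑ a, ∑ b, sigAss a b x y) :
    ∀ a b y, σ' a b 0 y = sigAss a b 0 y := by
  obtain ⟨t00, -, e00⟩ := hsupp 0 0 0 0
  obtain ⟨t01, -, e01⟩ := hsupp 0 1 0 0
  obtain ⟨t10, -, e10⟩ := hsupp 1 0 0 0
  obtain ⟨t11, -, e11⟩ := hsupp 1 1 0 0
  obtain ⟨a00, -, f00⟩ := hsupp 0 0 0 1
  obtain ⟨a01, -, f01⟩ := hsupp 0 1 0 1
  obtain ⟨a10, -, f10⟩ := hsupp 1 0 0 1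
  obtain ⟨a11, -, f11⟩ := hsupp 1 1 0 1
  obtain ⟨b00, -, g00⟩ := hsupp 0 0 1 1
  obtain ⟨b01, -, g01⟩ := hsupp 0 1 1 1
  obtain ⟨b10, -, g10⟩ := hsupp 1 0 1 1
  obtain ⟨b11, -, g11⟩ := hsupp 1 1 1 1
  obtain ⟨c00, -, k00⟩ := hsupp 0 0 1 0
  obtain ⟨c01, -, k01⟩ := hsupp 0 1 1 0
  obtain ⟨c10, -, k10⟩ := hsupp 1 0 1 0
  obtain ⟨c11, -, k11⟩ := hsupp 1 1 1 0
  have H1 := congrArg (fun M => M ((0,0)) ((0,0))) (h3 0 0)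
  have H2 := congrArg (fun M => M ((0,1)) ((0,1))) (h3 0 0)
  have H3 := congrArg (fun M => M ((0,0)) ((0,0))) (h3 0 1)
  have H4 := congrArg (fun M => M ((0,1)) ((0,1))) (h3 0 1)
  have H5 := congrArg (fun M => M ((0,0)) ((0,0))) (h1 0 1 0 1)
  have H6 := congrArg (fun M => M ((0,1)) ((0,1))) (h1 0 1 0 1)
  have H7 := congrArg (fun M => M ((0,0)) ((0,0))) (h1 1 1 0 1)
  have H8 := congrArg (fun M => M ((0,1)) ((0,1))) (h1 1 1 0 1)
  have H9 := congrArg (fun M => M 0 1) (h2 0 1 0 1)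
  have H10 := congrArg (fun M => M 0 1) (h2 1 1 0 1)
  simp only [Fin.sum_univ_two, e00, e01, e10, e11, f00, f01, f10, f11, g00, g01, g10, g11,
    k00, k01, k10, k11, ptraceFst, Matrix.of_apply,
    sigAss, Fin.reduceEq, reduceIte, Matrix.add_apply, Matrix.smul_apply, Matrix.sum_apply,
    Matrix.zero_apply, smul_eq_mul, smul_zero, mul_zero, add_zero, zero_add,
    pφ, pϕ, pξ, pθ] at H1 H2 H3 H4 H5 H6 H7 H8 H9 H10
  norm_num at H1 H2 H3 H4 H5 H6 H7 H8 H9 H10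
  have ht00 : (t00 : ℂ) = 1 := by rw [H1]; norm_num
  have ht11 : (t11 : ℂ) = 1 := by rw [H2]; norm_num
  have hb : (b00 : ℂ) = b01 := by linear_combination -8 * H9
  have hb' : (b10 : ℂ) = b11 := by linear_combination 8 * H10
  have haa : (a00 : ℂ) = a01 := by linear_combination 8*H5 - 8*H7 + (1/2)*hb + (1/2)*hb'
  have ha00 : (a00 : ℂ) = 1 := by linear_combination 4*H3 + (1/2)*haa
  have ha01 : (a01 : ℂ) = 1 := by linear_combination 4*H3 - (1/2)*haa
  have ha10 : (a10 : ℂ) = 1 := by linear_combination 8*H6 - 8*H5 + ha00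
  have ha11 : (a11 : ℂ) = 1 := by linear_combination 8*H8 - 8*H7 + ha01
  intro a b y
  fin_cases a <;> fin_cases b <;> fin_cases y
  · show σ' 0 0 0 0 = sigAss 0 0 0 0; rw [e00, ht00, one_smul]
  · show σ' 0 0 0 1 = sigAss 0 0 0 1; rw [f00, ha00, one_smul]
  · show σ' 0 1 0 0 = sigAss 0 1 0 0; rw [e01]; simp [sigAss]
  · show σ' 0 1 0 1 = sigAss 0 1 0 1; rw [f01, ha01, one_smul]
  · show σ' 1 0 0 0 = sigAss 1 0 0 0; rw [e10]; simp [sigAss]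
  · show σ' 1 0 0 1 = sigAss 1 0 0 1; rw [f10, ha10, one_smul]
  · show σ' 1 1 0 0 = sigAss 1 1 0 0; rw [e11, ht11, one_smul]
  · show σ' 1 1 0 1 = sigAss 1 1 0 1; rw [f11, ha11, one_smul]
end
end
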